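/- Let f : ℝ^d → ℝ be convex and L-smooth (differentiable with L-Lipschitz gradient, L > 0), bounded below with f* := inf f. Let w_0 ∈ ℝ^d and define gradient-descent iterates w_{τ+1} = w_τ − η ∇f(w_τ) with step size 0 < η ≤ 1/L. Let E be a positive integer and u := Σ_{τ=0}^{E−1} ∇f(w_τ), and assume u ≠ 0 and ‖u‖ ≤ C for some C > 0. Then for every w* ∈ ℝ^d, with Δ := f(w*) − f*, it holds that −2 η C ⟨u/‖u‖, w_0 − w*⟩ + η² C² ≤ −2 η E (C/‖u‖)·{(f(w_0) − f(w*))·(1 − 2η²L²E²) − 2η²L²E²·Δ} + η² C². -/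

import Mathlib

/-!
Convexity and smoothness give, for every local iterate `w τ`, the three-point bound
`f (w 0) - f w* ≤ ⟪∇f (w τ), w 0 - w*⟫ + L/2 ‖w 0 - w τ‖²`. Gradient descent with step `η ≤ 1/L`
does not increase `f`, so every gradient met along the way has `‖∇f‖² ≤ 2L (f (w 0) - f*)`, and
hence `‖w 0 - w τ‖ ≤ η τ √(2L (f (w 0) - f*))`. Summing over `τ < E` bounds `⟪u, w 0 - w*⟫` from
below; the claim is this bound with the error term doubled, scaled by `2ηC/‖u‖ ≥ 0`.
-/

open scoped RealInnerProductSpace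

section

variable {F : Type*} [NormedAddCommGroup F] [InnerProductSpace ℝ F] [CompleteSpace F]
  {f : F → ℝ}

open AffineMap in
theorem hasDerivAt_comp_lineMap (hf : Differentiable ℝ f) (x y : F) (t : ℝ) :
    HasDerivAt (f ∘ lineMap x y) ⟪gradient f (lineMap x y t), y - x⟫ t :=
  (hf _).hasGradientAt.hasFDerivAt.comp_hasDerivAt t hasDerivAt_lineMap

theorem ConvexOn.add_inner_gradient_le (hconv : ConvexOn ℝ Set.univ f)
    (hf : Differentiable ℝ f) (x y : F) : f x + ⟪gradient f x, y - x⟫ ≤ f y := by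
  have hderiv := hasDerivAt_comp_lineMap hf x y 0
  rw [AffineMap.lineMap_apply_zero] at hderiv
  have hslope := (hconv.comp_affineMap (AffineMap.lineMap x y)).le_slope_of_hasDerivAt
    (Set.mem_univ 0) (Set.mem_univ 1) one_pos hderiv
  simp only [slope_def_field, Function.comp_apply, AffineMap.lineMap_apply_zero,
    AffineMap.lineMap_apply_one, sub_zero, div_one] at hslope
  linarith

theorem le_add_inner_gradient_add_sq_of_lipschitz {L : ℝ} (hf : Differentiable ℝ f)
    (hlip : ∀ x y, ‖gradient f x - gradient f y‖ ≤ L * ‖x - y‖) (x y : F) :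
    f y ≤ f x + ⟪gradient f x, y - x⟫ + L / 2 * ‖y - x‖ ^ 2 := by
  set v := y - x
  let bound : ℝ → ℝ := fun t => f x + t * ⟪gradient f x, v⟫ + L / 2 * t ^ 2 * ‖v‖ ^ 2
  have hbound (t : ℝ) : HasDerivAt bound (⟪gradient f x, v⟫ + L * t * ‖v‖ ^ 2) t := by
    refine ((((hasDerivAt_id t).mul_const _).const_add (f x)).add
      (((hasDerivAt_pow 2 t).const_mul (L / 2)).mul_const (‖v‖ ^ 2))).congr_deriv ?_
    simp only [Nat.cast_ofNat, Nat.reduceSub, pow_one]; ring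
  have hderiv_le (t : ℝ) (ht : t ∈ Set.Ico (0 : ℝ) 1) :
      ⟪gradient f (AffineMap.lineMap x y t), v⟫ ≤ ⟪gradient f x, v⟫ + L * t * ‖v‖ ^ 2 := by
    have hdist : ‖AffineMap.lineMap x y t - x‖ = t * ‖v‖ := by
      rw [← vsub_eq_sub, AffineMap.lineMap_vsub_left, norm_smul, Real.norm_of_nonneg ht.1,
        vsub_eq_sub]
    calc ⟪gradient f (AffineMap.lineMap x y t), v⟫
        = ⟪gradient f x, v⟫ + ⟪gradient f (AffineMap.lineMap x y t) - gradient f x, v⟫ := by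
          rw [inner_sub_left]; ring
      _ ≤ ⟪gradient f x, v⟫ + L * ‖AffineMap.lineMap x y t - x‖ * ‖v‖ := by
          gcongr
          exact (real_inner_le_norm _ _).trans
            (mul_le_mul_of_nonneg_right (hlip _ _) (norm_nonneg v))
      _ = ⟪gradient f x, v⟫ + L * t * ‖v‖ ^ 2 := by rw [hdist]; ring
  have := image_le_of_deriv_right_le_deriv_boundary (f := f ∘ AffineMap.lineMap x y)
    (B := bound) (a := 0) (b := 1)
    (fun t _ => (hasDerivAt_comp_lineMap hf x y t).continuousAt.continuousWithinAt)
    (fun t _ => (hasDerivAt_comp_lineMap hf x y t).hasDerivWithinAt)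
    (by simp [bound])
    (fun t _ => (hbound t).continuousAt.continuousWithinAt)
    (fun t _ => (hbound t).hasDerivWithinAt) hderiv_le
    (Set.right_mem_Icc.2 zero_le_one)
  simpa [bound] using this

variable {L : ℝ}

theorem apply_sub_smul_gradient_le (hf : Differentiable ℝ f)
    (hlip : ∀ x y, ‖gradient f x - gradient f y‖ ≤ L * ‖x - y‖) (x : F) (s : ℝ) :
    f (x - s • gradient f x) ≤ f x - s * (1 - L * s / 2) * ‖gradient f x‖ ^ 2 := by
  have h := le_add_inner_gradient_add_sq_of_lipschitz hf hlip x (x - s • gradient f x)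
  rw [sub_sub_cancel_left, inner_neg_right, real_inner_smul_right, real_inner_self_eq_norm_sq,
    norm_neg, norm_smul, mul_pow, Real.norm_eq_abs, sq_abs] at h
  linarith

theorem apply_sub_smul_gradient_le_self (hf : Differentiable ℝ f)
    (hlip : ∀ x y, ‖gradient f x - gradient f y‖ ≤ L * ‖x - y‖) {s : ℝ} (hs : 0 ≤ s)
    (hsL : L * s ≤ 2) (x : F) : f (x - s • gradient f x) ≤ f x := by
  have := apply_sub_smul_gradient_le hf hlip x s
  have : 0 ≤ s * (1 - L * s / 2) * ‖gradient f x‖ ^ 2 := by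
    have : 0 ≤ 1 - L * s / 2 := by linarith
    positivity
  linarith

theorem sq_norm_gradient_le (hL : 0 < L) (hf : Differentiable ℝ f)
    (hlip : ∀ x y, ‖gradient f x - gradient f y‖ ≤ L * ‖x - y‖) {m : ℝ} (hm : ∀ z, m ≤ f z)
    (x : F) : ‖gradient f x‖ ^ 2 ≤ 2 * L * (f x - m) := by
  have h := (hm _).trans (apply_sub_smul_gradient_le hf hlip x L⁻¹)
  have hstep : L⁻¹ * (1 - L * L⁻¹ / 2) = (2 * L)⁻¹ := by field_simp; ring
  rw [hstep, ← div_eq_inv_mul, le_sub_comm, div_le_iff₀ (by positivity)] at h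
  linarith

theorem ConvexOn.sub_le_inner_gradient_add_sq (hconv : ConvexOn ℝ Set.univ f)
    (hf : Differentiable ℝ f) (hlip : ∀ x y, ‖gradient f x - gradient f y‖ ≤ L * ‖x - y‖)
    (x y z : F) : f x - f z ≤ ⟪gradient f y, x - z⟫ + L / 2 * ‖x - y‖ ^ 2 := by
  have hz := hconv.add_inner_gradient_le hf y z
  have hx := le_add_inner_gradient_add_sq_of_lipschitz hf hlip y x
  have hsplit : ⟪gradient f y, x - z⟫ = ⟪gradient f y, x - y⟫ - ⟪gradient f y, z - y⟫ := by
    rw [← inner_sub_right, sub_sub_sub_cancel_right]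
  linarith

section GradientDescent

variable {η : ℝ} {w : ℕ → F}

theorem sub_eq_smul_sum_gradient_of_gradient_descent
    (hw : ∀ τ, w (τ + 1) = w τ - η • gradient f (w τ)) (τ : ℕ) :
    w 0 - w τ = η • ∑ s ∈ Finset.range τ, gradient f (w s) := by
  induction τ with
  | zero => simp
  | succ τ ih => rw [hw τ, Finset.sum_range_succ, smul_add, ← ih]; abel

theorem antitone_comp_of_gradient_descent
    (hw : ∀ τ, w (τ + 1) = w τ - η • gradient f (w τ)) (hf : Differentiable ℝ f)
    (hlip : ∀ x y, ‖gradient f x - gradient f y‖ ≤ L * ‖x - y‖) (hη : 0 ≤ η) (hηL : L * η ≤ 2) :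
    Antitone (f ∘ w) :=
  antitone_nat_of_succ_le fun τ => by
    simpa only [Function.comp_apply, hw τ] using
      apply_sub_smul_gradient_le_self hf hlip hη hηL (w τ)

theorem sq_norm_sub_le_of_gradient_descent
    (hw : ∀ τ, w (τ + 1) = w τ - η • gradient f (w τ)) (hL : 0 < L) (hf : Differentiable ℝ f)
    (hlip : ∀ x y, ‖gradient f x - gradient f y‖ ≤ L * ‖x - y‖) {m : ℝ} (hm : ∀ z, m ≤ f z)
    (hη : 0 ≤ η) (hηL : L * η ≤ 2) (τ : ℕ) :
    ‖w 0 - w τ‖ ^ 2 ≤ 2 * L * η ^ 2 * τ ^ 2 * (f (w 0) - m) := by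
  set G := √(2 * L * (f (w 0) - m))
  have hG : G ^ 2 = 2 * L * (f (w 0) - m) :=
    Real.sq_sqrt (mul_nonneg (by positivity) (sub_nonneg.2 (hm _)))
  have hgrad (s : ℕ) : ‖gradient f (w s)‖ ≤ G := by
    rw [← abs_norm]
    refine Real.abs_le_sqrt ((sq_norm_gradient_le hL hf hlip hm _).trans ?_)
    gcongr
    exact antitone_comp_of_gradient_descent hw hf hlip hη hηL (Nat.zero_le s)
  have hnorm : ‖w 0 - w τ‖ ≤ η * (τ * G) := by
    rw [sub_eq_smul_sum_gradient_of_gradient_descent hw, norm_smul, Real.norm_of_nonneg hη]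
    gcongr
    calc ‖∑ s ∈ Finset.range τ, gradient f (w s)‖
        ≤ ∑ s ∈ Finset.range τ, ‖gradient f (w s)‖ := norm_sum_le _ _
      _ ≤ ∑ s ∈ Finset.range τ, G := Finset.sum_le_sum fun s _ => hgrad s
      _ = τ * G := by simp
  calc ‖w 0 - w τ‖ ^ 2 ≤ (η * (τ * G)) ^ 2 := by gcongr
    _ = 2 * L * η ^ 2 * τ ^ 2 * (f (w 0) - m) := by rw [mul_pow, mul_pow, hG]; ring

theorem le_inner_sum_gradient_of_gradient_descent
    (hw : ∀ τ, w (τ + 1) = w τ - η • gradient f (w τ)) (hL : 0 < L)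
    (hconv : ConvexOn ℝ Set.univ f) (hf : Differentiable ℝ f)
    (hlip : ∀ x y, ‖gradient f x - gradient f y‖ ≤ L * ‖x - y‖) {m : ℝ} (hm : ∀ z, m ≤ f z)
    (hη : 0 ≤ η) (hηL : L * η ≤ 2) (E : ℕ) (z : F) :
    E * (f (w 0) - f z - L ^ 2 * η ^ 2 * E ^ 2 * (f (w 0) - m))
      ≤ ⟪∑ τ ∈ Finset.range E, gradient f (w τ), w 0 - z⟫ := by
  have hterm (τ : ℕ) (hτ : τ ∈ Finset.range E) :
      f (w 0) - f z - L ^ 2 * η ^ 2 * E ^ 2 * (f (w 0) - m) ≤ ⟪gradient f (w τ), w 0 - z⟫ := by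
    have hτE : (τ : ℝ) ^ 2 ≤ (E : ℝ) ^ 2 := by
      gcongr; exact (Finset.mem_range.1 hτ).le
    have hgap : 0 ≤ f (w 0) - m := sub_nonneg.2 (hm _)
    have hdrift : L / 2 * ‖w 0 - w τ‖ ^ 2 ≤ L ^ 2 * η ^ 2 * E ^ 2 * (f (w 0) - m) :=
      calc L / 2 * ‖w 0 - w τ‖ ^ 2
          ≤ L / 2 * (2 * L * η ^ 2 * τ ^ 2 * (f (w 0) - m)) := by
            gcongr; exact sq_norm_sub_le_of_gradient_descent hw hL hf hlip hm hη hηL τ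
        _ = L ^ 2 * η ^ 2 * τ ^ 2 * (f (w 0) - m) := by ring
        _ ≤ L ^ 2 * η ^ 2 * E ^ 2 * (f (w 0) - m) := by gcongr
    linarith [hconv.sub_le_inner_gradient_add_sq hf hlip (w 0) (w τ) z]
  simpa only [sum_inner, Finset.sum_const, Finset.card_range, nsmul_eq_mul] using
    Finset.sum_le_sum hterm

end GradientDescent

end

theorem stmt_12_general {d : ℕ} (f : EuclideanSpace ℝ (Fin d) → ℝ) (L : ℝ) (hL : 0 < L)
    (hconv : ConvexOn ℝ Set.univ f)
    (hdiff : Differentiable ℝ f)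
    (hlip : ∀ x y, ‖gradient f x - gradient f y‖ ≤ L * ‖x - y‖)
    (fstar : ℝ) (hfstar : IsGLB (Set.range f) fstar)
    (η : ℝ) (hη0 : 0 < η) (hη : η ≤ 1 / L)
    (w : ℕ → EuclideanSpace ℝ (Fin d))
    (hw : ∀ τ, w (τ + 1) = w τ - η • gradient f (w τ))
    (E : ℕ)
    (u : EuclideanSpace ℝ (Fin d))
    (hu : u = ∑ τ ∈ Finset.range E, gradient f (w τ))
    (C : ℝ) (hC0 : 0 < C)
    (wstar : EuclideanSpace ℝ (Fin d))
    (Δ : ℝ) (hΔ : Δ = f wstar - fstar) :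
    -2 * η * C * ⟪‖u‖⁻¹ • u, w 0 - wstar⟫ + η ^ 2 * C ^ 2 ≤
      -2 * η * (E : ℝ) * (C / ‖u‖)
          * ((f (w 0) - f wstar) * (1 - 2 * η ^ 2 * L ^ 2 * (E : ℝ) ^ 2)
              - 2 * η ^ 2 * L ^ 2 * (E : ℝ) ^ 2 * Δ)
        + η ^ 2 * C ^ 2 := by
  have hm (z : EuclideanSpace ℝ (Fin d)) : fstar ≤ f z := hfstar.1 (Set.mem_range_self z)
  have hηL : L * η ≤ 2 := by rw [le_div_iff₀ hL] at hη; linarith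
  have hsum := le_inner_sum_gradient_of_gradient_descent hw hL hconv hdiff hlip hm hη0.le hηL E
    wstar
  rw [← hu] at hsum
  have hgap : 0 ≤ (E : ℝ) * (L ^ 2 * η ^ 2 * E ^ 2 * (f (w 0) - fstar)) := by
    have := sub_nonneg.2 (hm (w 0)); positivity
  have hbound : (E : ℝ) * ((f (w 0) - f wstar) * (1 - 2 * η ^ 2 * L ^ 2 * E ^ 2)
      - 2 * η ^ 2 * L ^ 2 * E ^ 2 * Δ) ≤ ⟪u, w 0 - wstar⟫ := by
    rw [hΔ]; linarith
  have hscale : 0 ≤ 2 * η * (C * ‖u‖⁻¹) := by positivity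
  rw [real_inner_smul_left, div_eq_mul_inv]
  linarith [mul_le_mul_of_nonneg_left hbound hscale]

/-- Case 2 (equation feb2-3) in the proof of Theorem E.1 (DP-NormFedAvg): bound
on the normalized-update term when the update norm is at most the scaling
factor `C`. -/
theorem stmt_12 {d : ℕ} (f : EuclideanSpace ℝ (Fin d) → ℝ) (L : ℝ) (hL : 0 < L)
    (hconv : ConvexOn ℝ Set.univ f)
    (hdiff : Differentiable ℝ f)
    (hlip : ∀ x y, ‖gradient f x - gradient f y‖ ≤ L * ‖x - y‖)
    (fstar : ℝ) (hfstar : IsGLB (Set.range f) fstar)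
    (η : ℝ) (hη0 : 0 < η) (hη : η ≤ 1 / L)
    (w : ℕ → EuclideanSpace ℝ (Fin d))
    (hw : ∀ τ, w (τ + 1) = w τ - η • gradient f (w τ))
    (E : ℕ) (hE : 0 < E)
    (u : EuclideanSpace ℝ (Fin d))
    (hu : u = ∑ τ ∈ Finset.range E, gradient f (w τ))
    (hu0 : u ≠ 0)
    (C : ℝ) (hC0 : 0 < C) (hnorm : ‖u‖ ≤ C)
    (wstar : EuclideanSpace ℝ (Fin d))
    (Δ : ℝ) (hΔ : Δ = f wstar - fstar) :
    -2 * η * C * ⟪‖u‖⁻¹ • u, w 0 - wstar⟫ + η ^ 2 * C ^ 2 ≤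
      -2 * η * (E : ℝ) * (C / ‖u‖)
          * ((f (w 0) - f wstar) * (1 - 2 * η ^ 2 * L ^ 2 * (E : ℝ) ^ 2)
              - 2 * η ^ 2 * L ^ 2 * (E : ℝ) ^ 2 * Δ)
        + η ^ 2 * C ^ 2 :=
  stmt_12_general f L hL hconv hdiff hlip fstar hfstar η hη0 hη w hw E u hu C hC0 wstar Δ hΔ
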